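/- Let D be a triangulated category with a t-structure (X, Y) with heart H, and let (T, F) be a torsion pair in H. Then the pair (X', Y') with X' the extension closure of T ∪ X[1] and Y' the extension closure of Y ∪ F is a t-structure on D satisfying X[1] ⊆ X' ⊆ X. Moreover X' = X[1] * T and Y' = F * Y. -/

import Mathlib

/-!
Write `P = T ∪ X⟦1⟧` and `Q = Y ∪ F`. Every morphism from an object of `P` to an object of `Q`
vanishes, and the truncation triangles of `(X, Y)` show `⊥Q ⊆ X⟦1⟧ * T` and `P⊥ ⊆ F * Y`. Hence
the extension closures satisfy `⟨P⟩ = X⟦1⟧ * T = ⊥Q` and `⟨Q⟩ = F * Y = P⊥`, which gives the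
orthogonality axioms.

To decompose an object `D`, let `x → D → y` be its `(X, Y)`-truncation, `a → x → h` the
`(X⟦1⟧, Y⟦1⟧)`-truncation of `x` (so `h` lies in the heart), `t → h → f` the torsion sequence of
`h`, `u` the fiber of `x → f` and `v` the cone of `u → D`. Without the octahedral axiom `u` cannot
be exhibited as an extension of `t` by `a`; instead, diagram chases show directly that `u ∈ ⊥Q`
and `v ∈ P⊥`.
-/

open CategoryTheory Category Limits Pretriangulated

namespace Paper

variable {C : Type*} [Category C] [HasZeroObject C] [Preadditive C] [HasShift C ℤ]
  [∀ n : ℤ, (shiftFunctor C n).Additive] [Pretriangulated C]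

/-- The shift of a class of objects: `S⟦n⟧` (closed under isomorphism). -/
def shiftSet (S : Set C) (n : ℤ) : Set C := {X | ∃ A ∈ S, Nonempty (X ≅ A⟦n⟧)}

/-- `S[≤ n] = { S⟦i⟧ ∣ S ∈ S, i ≤ n }`. -/
def shiftsLe (S : Set C) (n : ℤ) : Set C := {X | ∃ A ∈ S, ∃ i : ℤ, i ≤ n ∧ Nonempty (X ≅ A⟦i⟧)}

/-- `S[≥ n] = { S⟦i⟧ ∣ S ∈ S, i ≥ n }`. -/
def shiftsGe (S : Set C) (n : ℤ) : Set C := {X | ∃ A ∈ S, ∃ i : ℤ, n ≤ i ∧ Nonempty (X ≅ A⟦i⟧)}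

/-- `X * Y`: objects `D` fitting in a distinguished triangle `X → D → Y → X⟦1⟧`. -/
def star (X Y : Set C) : Set C :=
  {D | ∃ (A B : C) (f : A ⟶ D) (g : D ⟶ B) (h : B ⟶ A⟦(1 : ℤ)⟧),
    A ∈ X ∧ B ∈ Y ∧ Triangle.mk f g h ∈ distTriang C}

/-- Right perpendicular class. -/
def rightPerp (S : Set C) : Set C := {D | ∀ A ∈ S, ∀ f : A ⟶ D, f = 0}

/-- Left perpendicular class. -/
def leftPerp (S : Set C) : Set C := {D | ∀ B ∈ S, ∀ f : D ⟶ B, f = 0}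

/-- A t-structure `(X, Y)` on a (pre)triangulated category. -/
structure IsTStructure (X Y : Set C) : Prop where
  rp : rightPerp X = Y
  lp : leftPerp Y = X
  dec : ∀ D : C, D ∈ star X Y
  shift : shiftSet X 1 ⊆ X

/-- The heart `H = X ∩ Y⟦1⟧` of a t-structure. -/
def heart (X Y : Set C) : Set C := X ∩ shiftSet Y 1

/-- The extension closure of a class of objects. -/
inductive ExtClosure (S : Set C) : C → Prop
  | of {A : C} (h : A ∈ S) : ExtClosure S A
  | iso {A B : C} (e : A ≅ B) (h : ExtClosure S A) : ExtClosure S B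
  | ext {A E B : C} (f : A ⟶ E) (g : E ⟶ B) (h : B ⟶ A⟦(1 : ℤ)⟧)
      (hT : Triangle.mk f g h ∈ distTriang C)
      (hA : ExtClosure S A) (hB : ExtClosure S B) : ExtClosure S E

/-- The extension closure, as a set. -/
def extClosure (S : Set C) : Set C := {X | ExtClosure S X}

/-- A torsion pair `(T, F)` in the heart of a t-structure `(X, Y)`; short exact sequences in
the heart correspond to distinguished triangles with three terms in the heart. -/
structure IsHeartTorsionPair (X Y T F : Set C) : Prop where
  subT : T ⊆ heart X Y
  subF : F ⊆ heart X Y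
  rp : heart X Y ∩ rightPerp T = F
  lp : heart X Y ∩ leftPerp F = T
  dec : ∀ H₀ ∈ heart X Y, H₀ ∈ star T F

/-- A bounded t-structure. -/
def IsBounded (X Y : Set C) : Prop :=
  (∀ D : C, ∃ n : ℤ, D ∈ shiftSet X n) ∧ (∀ D : C, ∃ n : ℤ, D ∈ shiftSet Y n)

/-- A simple object of the heart of a t-structure: a nonzero object admitting no proper
subobjects in the heart (expressed via distinguished triangles with entries in the heart). -/
def IsSimpleInHeart (X Y : Set C) (A : C) : Prop :=
  A ∈ heart X Y ∧ ¬ IsZero A ∧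
  ∀ (A' B : C) (f : A' ⟶ A) (g : A ⟶ B) (h : B ⟶ A'⟦(1 : ℤ)⟧),
    Triangle.mk f g h ∈ (distTriang C) → A' ∈ heart X Y → B ∈ heart X Y →
    IsZero A' ∨ IsZero B

/-- An algebraic t-structure: a bounded t-structure whose heart is a length category with
finitely many simple objects, i.e. the heart is the extension closure of finitely many
simple objects. -/
def IsAlgebraic (X Y : Set C) : Prop :=
  IsTStructure X Y ∧ IsBounded X Y ∧
  ∃ (t : ℕ) (G : Fin t → C), (∀ i, IsSimpleInHeart X Y (G i)) ∧
    heart X Y = extClosure (Set.range G)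

/-- Thick closure: the smallest triangulated subcategory closed under direct summands. -/
inductive ThickClosure (S : Set C) : C → Prop
  | of {A : C} (h : A ∈ S) : ThickClosure S A
  | iso {A B : C} (e : A ≅ B) (h : ThickClosure S A) : ThickClosure S B
  | shift {A : C} (n : ℤ) (h : ThickClosure S A) : ThickClosure S (A⟦n⟧)
  | ext {A E B : C} (f : A ⟶ E) (g : E ⟶ B) (h : B ⟶ A⟦(1 : ℤ)⟧)
      (hT : Triangle.mk f g h ∈ distTriang C)
      (hA : ThickClosure S A) (hB : ThickClosure S B) : ThickClosure S E
  | retract {A B : C} (s : A ⟶ B) (r : B ⟶ A) (hsr : s ≫ r = 𝟙 A)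
      (h : ThickClosure S B) : ThickClosure S A

/-- Thick closure, as a set. -/
def thickClosure (S : Set C) : Set C := {X | ThickClosure S X}

/-- `Hom(S, T⟦i⟧) = 0` for all `i > 0`. -/
def vanishHomPos (S T : Set C) : Prop :=
  ∀ A ∈ S, ∀ B ∈ T, ∀ i : ℤ, 0 < i → ∀ f : A ⟶ B⟦i⟧, f = 0

/-- A silting subcategory `S` of the (thick) subcategory `P`. -/
def IsSiltingIn (P S : Set C) : Prop :=
  S ⊆ P ∧ thickClosure S = P ∧ vanishHomPos S S

/-- The aisle `X_S = (S[≤ 0])^⊥` of the t-structure associated to a silting subcategory. -/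
def siltXs (S : Set C) : Set C := rightPerp (shiftsLe S 0)

/-- The coaisle `Y_S = (S[≥ 0])^⊥` of the t-structure associated to a silting subcategory. -/
def siltYs (S : Set C) : Set C := rightPerp (shiftsGe S 0)

/-- A class of objects closed under isomorphisms, finite direct sums and direct summands. -/
def IsAddClosed [HasBinaryBiproducts C] (S : Set C) : Prop :=
  (∀ A B : C, (A ≅ B) → A ∈ S → B ∈ S) ∧
  (∀ A B : C, A ∈ S → B ∈ S → (A ⊞ B) ∈ S) ∧
  (∀ A B : C, (∃ (s : A ⟶ B) (r : B ⟶ A), s ≫ r = 𝟙 A) → B ∈ S → A ∈ S)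

/-- Silting-discreteness (relative to the subcategory `P` of compact objects, e.g.
`K^b(proj Λ)`): for every silting subcategory `S` of `P` there are only finitely many silting
subcategories `T` with `S ≥ T ≥ S⟦1⟧`. -/
def IsSiltingDiscrete [HasBinaryBiproducts C] (P : Set C) : Prop :=
  ∀ S : Set C, IsSiltingIn P S → IsAddClosed S →
    {T : Set C | IsSiltingIn P T ∧ IsAddClosed T ∧
      vanishHomPos S T ∧ vanishHomPos T (shiftSet S 1)}.Finite

/-- A t-structure on a full (pre)triangulated subcategory `B` of the ambient category. -/
structure IsTStructureOn (B X Y : Set C) : Prop where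
  subX : X ⊆ B
  subY : Y ⊆ B
  rp : B ∩ rightPerp X = Y
  lp : B ∩ leftPerp Y = X
  dec : ∀ D ∈ B, D ∈ star X Y
  shift : shiftSet X 1 ⊆ X

section Orthogonality

omit [HasZeroObject C] [HasShift C ℤ] [∀ n : ℤ, (shiftFunctor C n).Additive] [Pretriangulated C]

variable {S P Q : Set C}

lemma mem_leftPerp_iff {D : C} : D ∈ leftPerp S ↔ ∀ B ∈ S, ∀ f : D ⟶ B, f = 0 := Iff.rfl

lemma mem_rightPerp_iff {D : C} : D ∈ rightPerp S ↔ ∀ A ∈ S, ∀ f : A ⟶ D, f = 0 := Iff.rfl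

lemma eq_zero_of_mem_leftPerp {D B : C} (hD : D ∈ leftPerp S) (hB : B ∈ S) (f : D ⟶ B) :
    f = 0 :=
  hD B hB f

lemma eq_zero_of_mem_rightPerp {A D : C} (hD : D ∈ rightPerp S) (hA : A ∈ S) (f : A ⟶ D) :
    f = 0 :=
  hD A hA f

lemma leftPerp_anti (hPQ : P ⊆ Q) : leftPerp Q ⊆ leftPerp P :=
  fun _ hD B hB => hD B (hPQ hB)

lemma rightPerp_anti (hPQ : P ⊆ Q) : rightPerp Q ⊆ rightPerp P :=
  fun _ hD A hA => hD A (hPQ hA)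

lemma subset_leftPerp_iff_subset_rightPerp : P ⊆ leftPerp Q ↔ Q ⊆ rightPerp P :=
  ⟨fun h _ hB _ hA f => h hA _ hB f, fun h _ hA _ hB f => h hB _ hA f⟩

lemma mem_leftPerp_of_iso {A B : C} (e : A ≅ B) (hA : A ∈ leftPerp S) : B ∈ leftPerp S := by
  refine mem_leftPerp_iff.2 fun Z hZ f => ?_
  simpa using congrArg (e.inv ≫ ·) (eq_zero_of_mem_leftPerp hA hZ (e.hom ≫ f))

lemma mem_rightPerp_of_iso {A B : C} (e : A ≅ B) (hA : A ∈ rightPerp S) : B ∈ rightPerp S := by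
  refine mem_rightPerp_iff.2 fun Z hZ f => ?_
  simpa using congrArg (· ≫ e.hom) (eq_zero_of_mem_rightPerp hA hZ (f ≫ e.inv))

end Orthogonality

section ShiftSet

omit [HasZeroObject C] [Preadditive C] [∀ n : ℤ, (shiftFunctor C n).Additive] [Pretriangulated C]

variable {S P : Set C}

lemma shift_mem_shiftSet {A : C} (hA : A ∈ S) (n : ℤ) : A⟦n⟧ ∈ shiftSet S n :=
  ⟨A, hA, ⟨Iso.refl _⟩⟩

lemma shiftSet_mono (h : S ⊆ P) (n : ℤ) : shiftSet S n ⊆ shiftSet P n :=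
  fun _ ⟨A, hA, e⟩ => ⟨A, h hA, e⟩

end ShiftSet

section Triangles

variable {S : Set C}
variable {A B E : C} {f : A ⟶ E} {g : E ⟶ B} {h : B ⟶ A⟦(1 : ℤ)⟧}

lemma mem_leftPerp_of_distTriang₂ (hT : Triangle.mk f g h ∈ distTriang C)
    (hA : A ∈ leftPerp S) (hB : B ∈ leftPerp S) : E ∈ leftPerp S := by
  refine mem_leftPerp_iff.2 fun Z hZ φ => ?_
  obtain ⟨ψ : B ⟶ Z, hψ : φ = g ≫ ψ⟩ :=
    Triangle.yoneda_exact₂ _ hT φ (eq_zero_of_mem_leftPerp hA hZ _)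
  rw [hψ, eq_zero_of_mem_leftPerp hB hZ ψ, comp_zero]

lemma mem_rightPerp_of_distTriang₂ (hT : Triangle.mk f g h ∈ distTriang C)
    (hA : A ∈ rightPerp S) (hB : B ∈ rightPerp S) : E ∈ rightPerp S := by
  refine mem_rightPerp_iff.2 fun Z hZ φ => ?_
  obtain ⟨ψ : Z ⟶ A, hψ : φ = ψ ≫ f⟩ :=
    Triangle.coyoneda_exact₂ _ hT φ (eq_zero_of_mem_rightPerp hB hZ _)
  rw [hψ, eq_zero_of_mem_rightPerp hA hZ ψ, zero_comp]

lemma mem_leftPerp_of_distTriang₃ (hT : Triangle.mk f g h ∈ distTriang C)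
    (hE : E ∈ leftPerp S) (hA : A⟦(1 : ℤ)⟧ ∈ leftPerp S) : B ∈ leftPerp S := by
  refine mem_leftPerp_iff.2 fun Z hZ φ => ?_
  obtain ⟨ψ : A⟦(1 : ℤ)⟧ ⟶ Z, hψ : φ = h ≫ ψ⟩ :=
    Triangle.yoneda_exact₃ _ hT φ (eq_zero_of_mem_leftPerp hE hZ _)
  rw [hψ, eq_zero_of_mem_leftPerp hA hZ ψ, comp_zero]

lemma mem_rightPerp_of_distTriang₁ (hT : Triangle.mk f g h ∈ distTriang C)
    (hE : E ∈ rightPerp S) (hB : B ∈ rightPerp (shiftSet S 1)) : A ∈ rightPerp S := by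
  refine mem_rightPerp_iff.2 fun Z hZ φ => ?_
  have hφf : φ⟦(1 : ℤ)⟧' ≫ f⟦(1 : ℤ)⟧' = 0 := by
    rw [← Functor.map_comp, eq_zero_of_mem_rightPerp hE hZ (φ ≫ f), Functor.map_zero]
  obtain ⟨ψ : Z⟦(1 : ℤ)⟧ ⟶ B, hψ : φ⟦(1 : ℤ)⟧' = ψ ≫ h⟩ := Triangle.coyoneda_exact₁ _ hT _ hφf
  rw [← (shiftFunctor C (1 : ℤ)).map_eq_zero_iff, hψ,
    eq_zero_of_mem_rightPerp hB ⟨Z, hZ, ⟨Iso.refl _⟩⟩ ψ, zero_comp]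

end Triangles

section Shift

omit [HasZeroObject C] [Pretriangulated C]

lemma shift_map_eq_zero {A B : C} {n : ℤ} (h : ∀ ψ : A ⟶ B, ψ = 0) (φ : A⟦n⟧ ⟶ B⟦n⟧) :
    φ = 0 := by
  obtain ⟨ψ, rfl⟩ := (shiftFunctor C n).map_surjective φ
  rw [h ψ, Functor.map_zero]

lemma rightPerp_shiftSet (S : Set C) (n : ℤ) :
    rightPerp (shiftSet S n) = shiftSet (rightPerp S) n := by
  ext D
  constructor
  · intro hD
    let e : D⟦-n⟧⟦n⟧ ≅ D := (shiftFunctorCompIsoId C (-n) n (neg_add_cancel n)).app D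
    refine ⟨D⟦-n⟧, fun A hA φ => ?_, ⟨e.symm⟩⟩
    have : φ⟦n⟧' ≫ e.hom = 0 := hD _ (shift_mem_shiftSet hA n) _
    rwa [Preadditive.IsIso.comp_right_eq_zero, (shiftFunctor C n).map_eq_zero_iff] at this
  · rintro ⟨B, hB, ⟨e⟩⟩ A ⟨A₀, hA₀, ⟨eA⟩⟩ φ
    have : eA.inv ≫ φ ≫ e.hom = 0 := shift_map_eq_zero (hB A₀ hA₀) _
    simpa using this

end Shift

section Star

variable {S Q : Set C}

lemma shift_distTriang_mk {A B E : C} {f : A ⟶ E} {g : E ⟶ B} {h : B ⟶ A⟦(1 : ℤ)⟧}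
    (hT : Triangle.mk f g h ∈ distTriang C) :
    Triangle.mk (-f⟦(1 : ℤ)⟧') (-g⟦(1 : ℤ)⟧') (-h⟦(1 : ℤ)⟧') ∈ distTriang C :=
  rot_of_distTriang _ (rot_of_distTriang _ (rot_of_distTriang _ hT))

lemma shift_mem_star {D : C} (hD : D ∈ star S Q) :
    D⟦(1 : ℤ)⟧ ∈ star (shiftSet S 1) (shiftSet Q 1) := by
  obtain ⟨A, B, f, g, h, hA, hB, hT⟩ := hD
  exact ⟨_, _, _, _, _, shift_mem_shiftSet hA 1, shift_mem_shiftSet hB 1,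
    shift_distTriang_mk hT⟩

lemma mem_star_of_iso {D D' : C} (e : D ≅ D') (hD : D ∈ star S Q) :
    D' ∈ star S Q := by
  obtain ⟨A, B, f, g, h, hA, hB, hT⟩ := hD
  refine ⟨A, B, f ≫ e.hom, e.inv ≫ g, h, hA, hB, isomorphic_distinguished _ hT _
    (Triangle.isoMk _ _ (Iso.refl _) e.symm (Iso.refl _) ?_ ?_ ?_)⟩ <;> simp [Triangle.mk]

end Star

section ExtensionClosure

variable {S P Q : Set C}

lemma subset_extClosure : S ⊆ extClosure S := fun _ => ExtClosure.of

lemma extClosure_subset (hS : S ⊆ P) (hiso : ∀ {A B : C}, (A ≅ B) → A ∈ P → B ∈ P)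
    (hext : ∀ {A E B : C} (f : A ⟶ E) (g : E ⟶ B) (h : B ⟶ A⟦(1 : ℤ)⟧),
      Triangle.mk f g h ∈ distTriang C → A ∈ P → B ∈ P → E ∈ P) :
    extClosure S ⊆ P := by
  intro E hE
  induction hE with
  | of h => exact hS h
  | iso e _ ih => exact hiso e ih
  | ext f g h hT _ _ ihA ihB => exact hext f g h hT ihA ihB

lemma star_subset_extClosure (hP : P ⊆ S) (hQ : Q ⊆ S) : star P Q ⊆ extClosure S :=
  fun _ ⟨_, _, f, g, h, hA, hB, hT⟩ => .ext f g h hT (.of (hP hA)) (.of (hQ hB))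

lemma extClosure_subset_leftPerp (h : S ⊆ leftPerp P) : extClosure S ⊆ leftPerp P :=
  extClosure_subset h mem_leftPerp_of_iso fun _ _ _ hT => mem_leftPerp_of_distTriang₂ hT

lemma extClosure_subset_rightPerp (h : S ⊆ rightPerp P) : extClosure S ⊆ rightPerp P :=
  extClosure_subset h mem_rightPerp_of_iso fun _ _ _ hT => mem_rightPerp_of_distTriang₂ hT

lemma rightPerp_extClosure (S : Set C) : rightPerp (extClosure S) = rightPerp S := by
  refine (rightPerp_anti subset_extClosure).antisymm fun D hD => ?_
  have : extClosure S ⊆ leftPerp {D} :=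
    extClosure_subset_leftPerp fun A hA B hB => by rw [hB]; exact hD A hA
  exact fun A hA => this hA D rfl

lemma leftPerp_extClosure (S : Set C) : leftPerp (extClosure S) = leftPerp S := by
  refine (leftPerp_anti subset_extClosure).antisymm fun D hD => ?_
  have : extClosure S ⊆ rightPerp {D} :=
    extClosure_subset_rightPerp fun B hB A hA => by rw [hA]; exact hD B hB
  exact fun B hB => this hB D rfl

lemma shiftSet_extClosure_subset (hS : shiftSet S 1 ⊆ extClosure S) :
    shiftSet (extClosure S) 1 ⊆ extClosure S := by
  have key : extClosure S ⊆ {A | A⟦(1 : ℤ)⟧ ∈ extClosure S} :=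
    extClosure_subset (fun A hA => hS (shift_mem_shiftSet hA 1))
      (fun e hA => .iso ((shiftFunctor C (1 : ℤ)).mapIso e) hA)
      (fun _ _ _ hT hA hB => .ext _ _ _ (shift_distTriang_mk hT) hA hB)
  rintro D ⟨A, hA, ⟨e⟩⟩
  exact .iso e.symm (key hA)

end ExtensionClosure

section Composites

variable {S : Set C}

lemma mem_leftPerp_of_fiber_comp {a x h t f u : C}
    {k : a ⟶ x} {p : x ⟶ h} {θ : h ⟶ a⟦(1 : ℤ)⟧} (hT₁ : Triangle.mk k p θ ∈ distTriang C)
    {i : t ⟶ h} {π : h ⟶ f} {δ : f ⟶ t⟦(1 : ℤ)⟧} (hT₂ : Triangle.mk i π δ ∈ distTriang C)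
    {l : u ⟶ x} {ε : f ⟶ u⟦(1 : ℤ)⟧} (hT₃ : Triangle.mk l (p ≫ π) ε ∈ distTriang C)
    (ha : a ∈ leftPerp S) (ht : t ∈ leftPerp S) : u ∈ leftPerp S := by
  refine mem_leftPerp_iff.2 fun Z hZ g => ?_
  have hl : ∀ κ : x ⟶ Z, l ≫ κ = 0 := by
    intro κ
    obtain ⟨κ₁ : h ⟶ Z, hκ₁ : κ = p ≫ κ₁⟩ :=
      Triangle.yoneda_exact₂ _ hT₁ κ (eq_zero_of_mem_leftPerp ha hZ _)
    obtain ⟨κ₂ : f ⟶ Z, hκ₂ : κ₁ = π ≫ κ₂⟩ :=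
      Triangle.yoneda_exact₂ _ hT₂ κ₁ (eq_zero_of_mem_leftPerp ht hZ _)
    have hlpπ : l ≫ p ≫ π = 0 := comp_distTriang_mor_zero₁₂ _ hT₃
    rw [hκ₁, hκ₂, ← assoc, ← assoc, assoc l, hlpπ, zero_comp]
  have hε : ε ≫ g⟦(1 : ℤ)⟧' = 0 := by
    have hpπε : p ≫ π ≫ ε = 0 := by rw [← assoc]; exact comp_distTriang_mor_zero₂₃ _ hT₃
    obtain ⟨β : a⟦(1 : ℤ)⟧ ⟶ u⟦(1 : ℤ)⟧, hβ : π ≫ ε = θ ≫ β⟩ :=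
      Triangle.yoneda_exact₃ _ hT₁ (π ≫ ε) hpπε
    have hπ : π ≫ ε ≫ g⟦(1 : ℤ)⟧' = 0 := by
      rw [← assoc, hβ, assoc,
        shift_map_eq_zero (eq_zero_of_mem_leftPerp ha hZ) (β ≫ g⟦(1 : ℤ)⟧'), comp_zero]
    obtain ⟨ψ : t⟦(1 : ℤ)⟧ ⟶ Z⟦(1 : ℤ)⟧, hψ : ε ≫ g⟦(1 : ℤ)⟧' = δ ≫ ψ⟩ :=
      Triangle.yoneda_exact₃ _ hT₂ _ hπ
    rw [hψ, shift_map_eq_zero (eq_zero_of_mem_leftPerp ht hZ) ψ, comp_zero]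
  obtain ⟨κ : x⟦(1 : ℤ)⟧ ⟶ Z⟦(1 : ℤ)⟧, hκ : g⟦(1 : ℤ)⟧' = (-l⟦(1 : ℤ)⟧') ≫ κ⟩ :=
    Triangle.yoneda_exact₃ _ (rot_of_distTriang _ hT₃) _ hε
  obtain ⟨κ, rfl⟩ := (shiftFunctor C (1 : ℤ)).map_surjective κ
  rw [← (shiftFunctor C (1 : ℤ)).map_eq_zero_iff, hκ, Preadditive.neg_comp, ← Functor.map_comp,
    hl κ, Functor.map_zero, neg_zero]

lemma mem_rightPerp_of_cone_comp {x D y u f v : C}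
    {m : x ⟶ D} {s : D ⟶ y} {e : y ⟶ x⟦(1 : ℤ)⟧} (hT₁ : Triangle.mk m s e ∈ distTriang C)
    {l : u ⟶ x} {q : x ⟶ f} {ε : f ⟶ u⟦(1 : ℤ)⟧} (hT₂ : Triangle.mk l q ε ∈ distTriang C)
    {r : D ⟶ v} {d : v ⟶ u⟦(1 : ℤ)⟧} (hT₃ : Triangle.mk (l ≫ m) r d ∈ distTriang C)
    (hy : y ∈ rightPerp S) (hf : f ∈ rightPerp S) : v ∈ rightPerp S := by
  refine mem_rightPerp_iff.2 fun Z hZ g => ?_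
  have hd : g ≫ d = 0 := by
    have hdlm : (d ≫ l⟦(1 : ℤ)⟧') ≫ m⟦(1 : ℤ)⟧' = 0 := by
      rw [assoc, ← Functor.map_comp]; exact comp_distTriang_mor_zero₃₁ _ hT₃
    obtain ⟨β : v ⟶ y, hβ : d ≫ l⟦(1 : ℤ)⟧' = β ≫ e⟩ := Triangle.coyoneda_exact₁ _ hT₁ _ hdlm
    have hgdl : (g ≫ d) ≫ l⟦(1 : ℤ)⟧' = 0 := by
      rw [assoc, hβ, ← assoc, eq_zero_of_mem_rightPerp hy hZ (g ≫ β), zero_comp]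
    obtain ⟨ψ : Z ⟶ f, hψ : g ≫ d = ψ ≫ ε⟩ := Triangle.coyoneda_exact₁ _ hT₂ _ hgdl
    rw [hψ, eq_zero_of_mem_rightPerp hf hZ ψ, zero_comp]
  obtain ⟨γ : Z ⟶ D, hγ : g = γ ≫ r⟩ := Triangle.coyoneda_exact₃ _ hT₃ g hd
  obtain ⟨γ₁ : Z ⟶ x, hγ₁ : γ = γ₁ ≫ m⟩ :=
    Triangle.coyoneda_exact₂ _ hT₁ γ (eq_zero_of_mem_rightPerp hy hZ _)
  obtain ⟨γ₂ : Z ⟶ u, hγ₂ : γ₁ = γ₂ ≫ l⟩ :=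
    Triangle.coyoneda_exact₂ _ hT₂ γ₁ (eq_zero_of_mem_rightPerp hf hZ _)
  have hlmr : (l ≫ m) ≫ r = 0 := comp_distTriang_mor_zero₁₂ _ hT₃
  rw [hγ, hγ₁, hγ₂, assoc, assoc, ← assoc l, hlmr, comp_zero]

end Composites

namespace IsTStructure

variable {X Y : Set C} (hXY : IsTStructure X Y)
include hXY

lemma shift_mem {x : C} (hx : x ∈ X) : x⟦(1 : ℤ)⟧ ∈ X :=
  hXY.shift (shift_mem_shiftSet hx 1)

lemma rightPerp_shiftSet_eq : rightPerp (shiftSet X 1) = shiftSet Y 1 := by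
  rw [rightPerp_shiftSet, hXY.rp]

lemma mem_star_shiftSet (D : C) : D ∈ star (shiftSet X 1) (shiftSet Y 1) :=
  mem_star_of_iso ((shiftFunctorCompIsoId C (-1 : ℤ) 1 (by norm_num)).app D)
    (shift_mem_star (hXY.dec _))

end IsTStructure

namespace IsHeartTorsionPair

variable {X Y T F : Set C} (hXY : IsTStructure X Y) (hTF : IsHeartTorsionPair X Y T F)
include hXY hTF

lemma union_shiftSet_subset : T ∪ shiftSet X 1 ⊆ X :=
  Set.union_subset (fun _ hA => (hTF.subT hA).1) hXY.shift

lemma union_subset_leftPerp : T ∪ shiftSet X 1 ⊆ leftPerp (Y ∪ F) := by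
  have hF : F ⊆ rightPerp T ∩ rightPerp (shiftSet X 1) := fun B hB =>
    ⟨(hTF.rp ▸ hB : B ∈ heart X Y ∩ rightPerp T).2,
      hXY.rightPerp_shiftSet_eq ▸ (hTF.subF hB).2⟩
  rintro A hA B (hB | hB) φ
  · exact eq_zero_of_mem_leftPerp (hXY.lp ▸ hTF.union_shiftSet_subset hXY hA) hB φ
  · rcases hA with hA | hA
    exacts [eq_zero_of_mem_rightPerp (hF hB).1 hA φ, eq_zero_of_mem_rightPerp (hF hB).2 hA φ]

lemma union_subset_rightPerp : Y ∪ F ⊆ rightPerp (T ∪ shiftSet X 1) :=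
  subset_leftPerp_iff_subset_rightPerp.1 (hTF.union_subset_leftPerp hXY)

lemma leftPerp_subset_star : leftPerp (Y ∪ F) ⊆ star (shiftSet X 1) T := by
  intro D hD
  obtain ⟨a, b, k, p, θ, ha, hb, hT⟩ := hXY.mem_star_shiftSet D
  have hb' : b ∈ leftPerp (Y ∪ F) := mem_leftPerp_of_distTriang₃ hT hD
    (hTF.union_subset_leftPerp hXY (.inr (shift_mem_shiftSet (hXY.shift ha) 1)))
  have hbT : b ∈ T := by
    rw [← hTF.lp]
    exact ⟨⟨hXY.lp ▸ leftPerp_anti Set.subset_union_left hb', hb⟩,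
      leftPerp_anti Set.subset_union_right hb'⟩
  exact ⟨a, b, k, p, θ, ha, hbT, hT⟩

lemma rightPerp_subset_star : rightPerp (T ∪ shiftSet X 1) ⊆ star F Y := by
  intro D hD
  obtain ⟨x, y, m, s, e, hx, hy, hT⟩ := hXY.dec D
  have hshift : shiftSet (T ∪ shiftSet X 1) 1 ⊆ X :=
    (shiftSet_mono (hTF.union_shiftSet_subset hXY) 1).trans hXY.shift
  have hx' : x ∈ rightPerp (T ∪ shiftSet X 1) :=
    mem_rightPerp_of_distTriang₁ hT hD (rightPerp_anti hshift (hXY.rp ▸ hy))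
  have hxF : x ∈ F := by
    rw [← hTF.rp]
    exact ⟨⟨hx, hXY.rightPerp_shiftSet_eq ▸ rightPerp_anti Set.subset_union_right hx'⟩,
      rightPerp_anti Set.subset_union_left hx'⟩
  exact ⟨x, y, m, s, e, hxF, hy, hT⟩

lemma leftPerp_eq_star : leftPerp (Y ∪ F) = star (shiftSet X 1) T :=
  (hTF.leftPerp_subset_star hXY).antisymm <|
    (star_subset_extClosure Set.subset_union_right Set.subset_union_left).trans
      (extClosure_subset_leftPerp (hTF.union_subset_leftPerp hXY))

lemma rightPerp_eq_star : rightPerp (T ∪ shiftSet X 1) = star F Y :=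
  (hTF.rightPerp_subset_star hXY).antisymm <|
    (star_subset_extClosure Set.subset_union_right Set.subset_union_left).trans
      (extClosure_subset_rightPerp (hTF.union_subset_rightPerp hXY))

lemma extClosure_eq_leftPerp : extClosure (T ∪ shiftSet X 1) = leftPerp (Y ∪ F) :=
  (extClosure_subset_leftPerp (hTF.union_subset_leftPerp hXY)).antisymm <|
    (hTF.leftPerp_eq_star hXY).le.trans
      (star_subset_extClosure Set.subset_union_right Set.subset_union_left)

lemma extClosure_eq_rightPerp : extClosure (Y ∪ F) = rightPerp (T ∪ shiftSet X 1) :=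
  (extClosure_subset_rightPerp (hTF.union_subset_rightPerp hXY)).antisymm <|
    (hTF.rightPerp_eq_star hXY).le.trans
      (star_subset_extClosure Set.subset_union_right Set.subset_union_left)

lemma mem_star_leftPerp_rightPerp (D : C) :
    D ∈ star (leftPerp (Y ∪ F)) (rightPerp (T ∪ shiftSet X 1)) := by
  obtain ⟨x, y, m, s, e, hx, hy, hT₁⟩ := hXY.dec D
  obtain ⟨a, h, k, p, θ, ha, hh, hT₂⟩ := hXY.mem_star_shiftSet x
  have hhX : h ∈ X := hXY.lp ▸ mem_leftPerp_of_distTriang₃ hT₂ (hXY.lp ▸ hx)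
    (hXY.lp ▸ hXY.shift_mem (hXY.shift ha))
  obtain ⟨t, f, i, π, δ, ht, hf, hT₃⟩ := hTF.dec h ⟨hhX, hh⟩
  obtain ⟨u, l, ε, hT₄⟩ := distinguished_cocone_triangle₁ (p ≫ π)
  obtain ⟨v, r, d, hT₅⟩ := distinguished_cocone_triangle (l ≫ m)
  have hL := hTF.union_subset_leftPerp hXY
  have hR := hTF.union_subset_rightPerp hXY
  exact ⟨u, v, l ≫ m, r, d,
    mem_leftPerp_of_fiber_comp hT₂ hT₃ hT₄ (hL (.inr ha)) (hL (.inl ht)),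
    mem_rightPerp_of_cone_comp hT₁ hT₄ hT₅ (hR (.inl hy)) (hR (.inr hf)), hT₅⟩

end IsHeartTorsionPair

/-- The HRS-tilt of a t-structure `(X, Y)` at a torsion pair `(T, F)` in its
heart is a t-structure `(X', Y') = (⟨T, X⟦1⟧⟩, ⟨Y, F⟩)` with `X⟦1⟧ ⊆ X' ⊆ X`; moreover
`X' = X⟦1⟧ * T` and `Y' = F * Y`. -/
theorem statement1 (X Y T F : Set C)
    (h : IsTStructure X Y) (htf : IsHeartTorsionPair X Y T F) :
    IsTStructure (extClosure (T ∪ shiftSet X 1)) (extClosure (Y ∪ F)) ∧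
    shiftSet X 1 ⊆ extClosure (T ∪ shiftSet X 1) ∧
    extClosure (T ∪ shiftSet X 1) ⊆ X ∧
    extClosure (T ∪ shiftSet X 1) = star (shiftSet X 1) T ∧
    extClosure (Y ∪ F) = star F Y := by
  have hX' := htf.extClosure_eq_leftPerp h
  have hY' := htf.extClosure_eq_rightPerp h
  have hX1 : shiftSet X 1 ⊆ extClosure (T ∪ shiftSet X 1) :=
    Set.subset_union_right.trans subset_extClosure
  refine ⟨⟨?_, ?_, ?_, ?_⟩, hX1, ?_, hX'.trans (htf.leftPerp_eq_star h),
    hY'.trans (htf.rightPerp_eq_star h)⟩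
  · rw [rightPerp_extClosure, hY']
  · rw [leftPerp_extClosure, hX']
  · intro D
    rw [hX', hY']
    exact htf.mem_star_leftPerp_rightPerp h D
  · exact shiftSet_extClosure_subset ((shiftSet_mono (htf.union_shiftSet_subset h) 1).trans hX1)
  · rw [hX', ← h.lp]
    exact leftPerp_anti Set.subset_union_left

end Paper
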